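/- Fix k ≥ 1, α, ω ∈ ℝ, g ∈ ℂ. With H_± := ω N ± (ḡ a^k + g (a†)^k) on finitely supported sequences in ℓ²(ℕ), the generalized parity X_k (where X_k e_m = (−1)^(⌊m/k⌋) e_m) satisfies the Riccati equation α X_k² + X_k H₊ − H₋ X_k − α = 0. -/

import Mathlib

/-!
Write `V = ḡ aᵏ + g (a†)ᵏ`, so that `H± = ω N ± V`. Since `X` is an involution, the Riccati
expression reduces to `X H₊ - H₋ X`, which vanishes once `X` commutes with `N` and anticommutes
with `V`. Both are read off the basis `eₘ`: `X` and `N` are diagonal, while `aᵏ` and `(a†)ᵏ` move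
`eₘ` to a multiple of `e_{m ∓ k}`, and such a shift by `k` changes `⌊m / k⌋` by one, hence flips
the sign `(-1)^⌊m/k⌋`.
-/

open scoped ComplexConjugate

open Finsupp

theorem riccati_eq_zero_of_mul_self_of_intertwines {R A : Type*} [Ring A] [SMul R A] (α : R)
    {X Hp Hm : A} (hX : X * X = 1) (h : X * Hp = Hm * X) :
    α • (X * X) + X * Hp - Hm * X - α • 1 = 0 := by
  rw [hX, h, add_sub_cancel_right, sub_self]

theorem mul_add_eq_sub_mul_of_commute {R A : Type*} [CommSemiring R] [Ring A] [Algebra R A]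
    (r : R) {X N V : A} (hN : Commute X N) (hV : X * V = -(V * X)) :
    X * (r • N + V) = (r • N - V) * X := by
  rw [mul_add, mul_smul_comm, hN.eq, hV, sub_mul, smul_mul_assoc, sub_eq_add_neg]

theorem mul_smul_add_smul_eq_neg_mul {R A : Type*} [CommSemiring R] [Ring A] [Algebra R A]
    (r s : R) {X U V : A} (hU : X * U = -(U * X)) (hV : X * V = -(V * X)) :
    X * (r • U + s • V) = -((r • U + s • V) * X) := by
  rw [mul_add, add_mul, mul_smul_comm, mul_smul_comm, smul_mul_assoc, smul_mul_assoc, hU, hV,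
    smul_neg, smul_neg, neg_add]

section Operators

variable {R : Type*} [CommRing R]

theorem Finsupp.lhom_ext_single_one {ι : Type*} {φ ψ : Module.End R (ι →₀ R)}
    (h : ∀ i, φ (single i 1) = ψ (single i 1)) : φ = ψ :=
  lhom_ext' fun i => LinearMap.ext_ring (h i)

def IsDiagonal {ι : Type*} (s : ι → R) (T : Module.End R (ι →₀ R)) : Prop :=
  ∀ i, T (single i 1) = s i • single i 1

/-- `T eₙ` is a multiple of `e_{n + d}`, and `T eₙ = 0` when `n + d < 0`. -/
def IsShift (d : ℤ) (T : Module.End R (ℕ →₀ R)) : Prop :=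
  ∀ n : ℕ, T (single n 1) ∈ supported R R {m : ℕ | (m : ℤ) = n + d}

namespace IsDiagonal

variable {ι : Type*} {s t : ι → R} {X Y : Module.End R (ι →₀ R)}

theorem supported_le_eigenspace (hX : IsDiagonal s X) {S : Set ι} {r : R}
    (hs : ∀ i ∈ S, s i = r) : supported R R S ≤ X.eigenspace r := by
  rw [supported_eq_span_single, Submodule.span_le]
  rintro _ ⟨i, hi, rfl⟩
  rw [SetLike.mem_coe, Module.End.mem_eigenspace_iff, hX i, hs i hi]

theorem commute (hX : IsDiagonal s X) (hY : IsDiagonal t Y) : Commute X Y :=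
  lhom_ext_single_one fun i => by
    simp only [Module.End.mul_apply, hX i, hY i, map_smul, smul_comm (s i) (t i)]

theorem mul_self_eq_one (hX : IsDiagonal s X) (hs : ∀ i, s i * s i = 1) : X * X = 1 :=
  lhom_ext_single_one fun i => by
    rw [Module.End.mul_apply, hX i, map_smul, hX i, smul_smul, hs i, one_smul,
      Module.End.one_apply]

end IsDiagonal

namespace IsShift

variable {d e : ℤ} {S T : Module.End R (ℕ →₀ R)}

theorem one : IsShift (0 : ℤ) (1 : Module.End R (ℕ →₀ R)) := fun n =>
  single_mem_supported R 1 (by simp)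

theorem mul (hS : IsShift d S) (hT : IsShift e T) : IsShift (e + d) (S * T) := by
  intro n
  have hmaps : supported R R {m : ℕ | (m : ℤ) = n + e}
      ≤ (supported R R {l : ℕ | (l : ℤ) = n + (e + d)}).comap S := by
    rw [supported_eq_span_single, Submodule.span_le]
    rintro _ ⟨m, hm, rfl⟩
    refine supported_mono (fun l hl => ?_) (hS m)
    simp only [Set.mem_ofPred_eq] at hm hl ⊢
    omega
  exact hmaps (hT n)

theorem pow (hT : IsShift d T) (p : ℕ) : IsShift ((p : ℤ) * d) (T ^ p) := by
  induction p with
  | zero => simpa using one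
  | succ p ih =>
    rw [pow_succ', Nat.cast_succ, add_one_mul]
    exact hT.mul ih

theorem of_apply_single_raise {μ : ℕ → R} (h : ∀ n, T (single n 1) = μ n • single (n + 1) 1) :
    IsShift 1 T := fun n => by
  rw [h n]
  exact Submodule.smul_mem _ _ (single_mem_supported R 1 (by simp))

theorem of_apply_single_lower {μ : ℕ → R} (h0 : T (single 0 1) = 0)
    (h : ∀ n, T (single (n + 1) 1) = μ n • single n 1) : IsShift (-1) T := by
  rintro (_ | n)
  · rw [h0]
    exact Submodule.zero_mem _
  · rw [h n]
    exact Submodule.smul_mem _ _ (single_mem_supported R 1 (by simp))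

end IsShift

theorem IsDiagonal.mul_eq_neg_mul_of_isShift {s : ℕ → R} {d : ℤ} {X T : Module.End R (ℕ →₀ R)}
    (hX : IsDiagonal s X) (hT : IsShift d T) (hs : ∀ n m : ℕ, (m : ℤ) = n + d → s m = -s n) :
    X * T = -(T * X) :=
  lhom_ext_single_one fun n => by
    have hTn : X (T (single n 1)) = -s n • T (single n 1) :=
      Module.End.mem_eigenspace_iff.mp
        (hX.supported_le_eigenspace (fun m hm => hs n m hm) (hT n))
    rw [LinearMap.neg_apply, Module.End.mul_apply, Module.End.mul_apply, hTn, hX n, map_smul,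
      neg_smul]

end Operators

theorem neg_one_pow_add_div_self {R : Type*} [Ring R] {k : ℕ} (hk : 0 < k) (n : ℕ) :
    (-1 : R) ^ ((n + k) / k) = -(-1) ^ (n / k) := by
  rw [Nat.add_div_right n hk, pow_succ, mul_neg_one]

theorem stmt_15 (k : ℕ) (hk : 1 ≤ k) (α ω : ℝ) (g : ℂ)
    (N a c X : Module.End ℂ (ℕ →₀ ℂ))
    (hN : ∀ n : ℕ, N (Finsupp.single n 1) = (n : ℂ) • Finsupp.single n 1)
    (ha0 : a (Finsupp.single 0 1) = 0)
    (ha : ∀ n : ℕ, a (Finsupp.single (n + 1) 1) =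
      (Real.sqrt (n + 1) : ℂ) • Finsupp.single n 1)
    (hc : ∀ n : ℕ, c (Finsupp.single n 1) =
      (Real.sqrt (n + 1) : ℂ) • Finsupp.single (n + 1) 1)
    (hX : ∀ m : ℕ, X (Finsupp.single m 1) =
      (-1 : ℂ) ^ (m / k) • Finsupp.single m 1) :
    (α : ℂ) • (X * X)
      + X * ((ω : ℂ) • N + (conj g • a ^ k + g • c ^ k))
      - ((ω : ℂ) • N - (conj g • a ^ k + g • c ^ k)) * X
      - (α : ℂ) • (1 : Module.End ℂ (ℕ →₀ ℂ)) = 0 := by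
  have hXdiag : IsDiagonal (fun m => (-1 : ℂ) ^ (m / k)) X := hX
  have hXX : X * X = 1 := hXdiag.mul_self_eq_one fun m => by
    rw [← pow_add, ← two_mul, pow_mul, neg_one_sq, one_pow]
  have hNdiag : IsDiagonal (fun n : ℕ => (n : ℂ)) N := hN
  have hXN : Commute X N := hXdiag.commute hNdiag
  have hXa : X * a ^ k = -(a ^ k * X) :=
    hXdiag.mul_eq_neg_mul_of_isShift ((IsShift.of_apply_single_lower ha0 ha).pow k)
      fun n m hm => by
        obtain rfl : n = m + k := by omega
        rw [neg_one_pow_add_div_self hk, neg_neg]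
  have hXc : X * c ^ k = -(c ^ k * X) :=
    hXdiag.mul_eq_neg_mul_of_isShift ((IsShift.of_apply_single_raise hc).pow k)
      fun n m hm => by
        obtain rfl : m = n + k := by omega
        exact neg_one_pow_add_div_self hk n
  have hXV := mul_smul_add_smul_eq_neg_mul (A := Module.End ℂ (ℕ →₀ ℂ)) (conj g) g hXa hXc
  exact riccati_eq_zero_of_mul_self_of_intertwines _ hXX
    (mul_add_eq_sub_mul_of_commute (A := Module.End ℂ (ℕ →₀ ℂ)) ω hXN hXV)
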